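/- Let d ≥ 2 and let ρ = Σ_{k,l=1}^d β_k conj(β_l)|k⟩⟨l| be a rank-one density operator on ℂ^d with Σ|β_i|² = 1. With the Kraus operators E_j = (1/√(d+1))|j⟩⟨j| (j = 1,…,d) and E_n = (1/√(4^{d-1}(d+1)))|ψ(n)⟩⟨ψ(n)|σ_z(n) for n ∈ {0}×{0,1,2,3}^{d-1} as defined via |ψ(n)⟩ = Σ_j i^{n_j}|j⟩ and σ_z(n) = Σ_j (-1)^{n_j}|j⟩⟨j|, the operator Σ_i E_i ρ E_i† has matrix entries: diagonal entry (p,p) equal to (1 + |β_p|²)/(d+1), and off-diagonal entry (p,q) for p ≠ q equal to β_q·conj(β_p)/(d+1). -/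

import Mathlib

open Complex Matrix

/-- `|ψ(n)⟩⟨ψ(n)|` where `|ψ(n)⟩ = Σ_j i^{n_j}|j⟩`. -/
noncomputable def psiProj (d : ℕ) (n : Fin d → Fin 4) : Matrix (Fin d) (Fin d) ℂ :=
  Matrix.of fun p q => Complex.I ^ (n p : ℕ) * (-Complex.I) ^ (n q : ℕ)

/-- `σ_z(n) = Σ_j (-1)^{n_j}|j⟩⟨j|`. -/
noncomputable def sigmaZ (d : ℕ) (n : Fin d → Fin 4) : Matrix (Fin d) (Fin d) ℂ :=
  Matrix.diagonal fun j => (-1 : ℂ) ^ (n j : ℕ)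

/-- The rank-one Kraus operator `E_n = (1/√(4^{d-1}(d+1)))|ψ(n)⟩⟨ψ(n)|σ_z(n)`. -/
noncomputable def krausPsi (d : ℕ) (n : Fin d → Fin 4) : Matrix (Fin d) (Fin d) ℂ :=
  ((1 : ℂ) / (Real.sqrt (4 ^ (d - 1) * (d + 1)) : ℝ)) • (psiProj d n * sigmaZ d n)

/-- The rank-one Kraus operator `E_j = (1/√(d+1))|j⟩⟨j|`. -/
noncomputable def krausDiag (d : ℕ) (j : Fin d) : Matrix (Fin d) (Fin d) ℂ :=
  ((1 : ℂ) / (Real.sqrt (d + 1) : ℝ)) • Matrix.single j j (1 : ℂ)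

/-!
Each `krausPsi d n` is `c • vecMulVec v v` for the phase vector `v k = i ^ n k`, so entry
`(p, q)` of its contribution is a combination of the phase products
`v p * v k * conj (v l) * conj (v q)`. Averaged over independent uniform phases in
`{1, i, -1, -i}` such a product vanishes unless the multisets `{p, k}` and `{q, l}` coincide;
pinning the first phase loses nothing, because two weight vectors of equal total mass that agree
off one site agree everywhere. Hence the `ψ`-family maps `ρ` to
`(tr ρ • 1 + ρᵀ - diag ρ) / (d + 1)`, the diagonal family supplies the missing
`diag ρ / (d + 1)`, and the whole channel is `ρ ↦ (tr ρ • 1 + ρᵀ) / (d + 1)`.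
-/

open Finset

lemma sum_range_pow_of_pow_eq_one {K : Type*} [DivisionRing K] [DecidableEq K] {z : K} {N : ℕ}
    (hz : z ^ N = 1) :
    ∑ m ∈ range N, z ^ m = if z = 1 then (N : K) else 0 := by
  split_ifs with h
  · simp [h]
  · rw [geom_sum_eq h, hz, sub_self, zero_div]

lemma I_pow_mul_neg_I_pow_eq_one_iff {a b : ℕ} (ha : a < 4) (hb : b < 4) :
    I ^ a * (-I) ^ b = 1 ↔ a = b := by
  have hinv : (-I) ^ b * I ^ b = 1 := by rw [← mul_pow]; simp
  refine ⟨fun h => isPrimitiveRoot_I.pow_inj ha hb ?_, fun h => by rw [h, mul_comm, hinv]⟩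
  calc I ^ a = I ^ a * ((-I) ^ b * I ^ b) := by rw [hinv, mul_one]
    _ = I ^ b := by rw [← mul_assoc, h, one_mul]

lemma sum_fin_four_I_pow_mul_neg_I_pow {a b : ℕ} (ha : a < 4) (hb : b < 4) :
    ∑ m : Fin 4, (I ^ a * (-I) ^ b) ^ (m : ℕ) = if a = b then 4 else 0 := by
  have h4 : (I ^ a * (-I) ^ b) ^ 4 = 1 := by
    rw [mul_pow, ← pow_mul, ← pow_mul, mul_comm a, mul_comm b, pow_mul, pow_mul]
    norm_num
  rw [Fin.sum_univ_eq_sum_range (fun m => (I ^ a * (-I) ^ b) ^ m),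
    sum_range_pow_of_pow_eq_one h4]
  simp only [I_pow_mul_neg_I_pow_eq_one_iff ha hb]
  norm_num

lemma sum_filter_apply_eq_prod {ι α R : Type*} [Fintype ι] [DecidableEq ι] [Fintype α]
    [DecidableEq α] [CommSemiring R] (i₀ : ι) (a₀ : α) (f : ι → α → R) :
    ∑ n ∈ univ.filter (fun n : ι → α => n i₀ = a₀), ∏ i, f i (n i)
      = f i₀ a₀ * ∏ i ∈ univ.erase i₀, ∑ a, f i a := by
  have hS : univ.filter (fun n : ι → α => n i₀ = a₀)
      = Fintype.piFinset (Function.update (fun _ => (univ : Finset α)) i₀ {a₀}) := by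
    ext n
    simp only [mem_filter, mem_univ, true_and, Fintype.mem_piFinset]
    refine ⟨fun h i => ?_, fun h => by simpa using h i₀⟩
    rcases eq_or_ne i i₀ with rfl | hi <;> simp [*]
  rw [hS, ← prod_univ_sum, ← mul_prod_erase _ _ (mem_univ i₀)]
  congr 1
  · simp
  · exact prod_congr rfl fun i hi => by rw [Function.update_of_ne (ne_of_mem_erase hi)]

lemma eq_of_sum_eq_of_forall_ne {ι M : Type*} [Fintype ι] [DecidableEq ι]
    [AddCancelCommMonoid M] {f g : ι → M} (i₀ : ι) (hsum : ∑ i, f i = ∑ i, g i)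
    (h : ∀ i, i ≠ i₀ → f i = g i) : f = g := by
  funext i
  by_cases hi : i = i₀
  · subst hi
    rw [← add_sum_erase _ _ (mem_univ i), ← add_sum_erase _ g (mem_univ i),
      sum_congr rfl fun j hj => h j (ne_of_mem_erase hj)] at hsum
    exact add_right_cancel hsum
  · exact h i hi

lemma sum_sum_ite_pair_eq {R n : Type*} [AddCommMonoid R] [Fintype n] [DecidableEq n]
    (A : Matrix n n R) (p q : n) :
    ∑ k, ∑ l, (if p = q ∧ k = l ∨ p = l ∧ k = q then A k l else 0)
      = if p = q then A.trace else A q p := by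
  split_ifs with hpq
  · have hcond : ∀ k l, (p = q ∧ k = l ∨ p = l ∧ k = q) ↔ k = l := by
      subst hpq
      rintro k l; constructor
      · rintro (⟨-, h⟩ | ⟨rfl, rfl⟩) <;> trivial
      · exact fun h => Or.inl ⟨rfl, h⟩
    simp [hcond, trace]
  · have hcond : ∀ k l, (p = q ∧ k = l ∨ p = l ∧ k = q) ↔ k = q ∧ l = p := by
      rintro k l
      simp [hpq, eq_comm, and_comm]
    simp [hcond, ite_and]

lemma smul_mul_mul_conjTranspose_smul {R n : Type*} [CommSemiring R] [StarRing R] [Fintype n]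
    (c : R) (M A : Matrix n n R) :
    c • M * A * (c • M)ᴴ = (c * star c) • (M * A * Mᴴ) := by
  rw [conjTranspose_smul, smul_mul, smul_mul, Matrix.mul_smul, smul_smul]

lemma vecMulVec_mul_mul_conjTranspose_apply {R n : Type*} [CommSemiring R] [StarRing R]
    [Fintype n] (u w : n → R) (A : Matrix n n R) (p q : n) :
    (vecMulVec u w * A * (vecMulVec u w)ᴴ) p q
      = ∑ k, ∑ l, A k l * (u p * w k * star (w l) * star (u q)) := by
  simp only [mul_apply, vecMulVec_apply, conjTranspose_apply, star_mul', sum_mul]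
  rw [sum_comm]
  refine sum_congr rfl fun k _ => sum_congr rfl fun l _ => ?_
  ring

lemma one_div_sqrt_mul_star {x : ℝ} (hx : 0 ≤ x) :
    (1 : ℂ) / (Real.sqrt x : ℝ) * star ((1 : ℂ) / (Real.sqrt x : ℝ))
      = ((x : ℝ) : ℂ)⁻¹ := by
  rw [Complex.star_def, map_div₀, map_one, conj_ofReal, div_mul_div_comm, one_mul,
    ← ofReal_mul, Real.mul_self_sqrt hx, one_div]

section

variable {d : ℕ}

lemma sum_filter_I_pow_mul_neg_I_pow (j₀ p k l q : Fin d) :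
    ∑ n ∈ univ.filter (fun n : Fin d → Fin 4 => n j₀ = 0),
        I ^ (n p : ℕ) * I ^ (n k : ℕ) * (-I) ^ (n l : ℕ) * (-I) ^ (n q : ℕ)
      = if p = q ∧ k = l ∨ p = l ∧ k = q then 4 ^ (d - 1) else 0 := by
  set a : Fin d → ℕ := Pi.single p 1 + Pi.single k 1
  set b : Fin d → ℕ := Pi.single q 1 + Pi.single l 1
  have hweight : ∀ (x y : Fin d) (n : Fin d → Fin 4),
      ∑ j, (Pi.single x 1 + Pi.single y 1 : Fin d → ℕ) j * (n j : ℕ) = n x + n y := by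
    intro x y n
    simp [add_mul, sum_add_distrib, Pi.single_apply]
  have hprod : ∀ n : Fin d → Fin 4,
      I ^ (n p : ℕ) * I ^ (n k : ℕ) * (-I) ^ (n l : ℕ) * (-I) ^ (n q : ℕ)
        = ∏ j, (I ^ a j * (-I) ^ b j) ^ (n j : ℕ) := by
    intro n
    simp only [mul_pow, ← pow_mul, prod_mul_distrib, prod_pow_eq_pow_sum, a, b, hweight]
    ring
  have hsmall : ∀ (x y j : Fin d), (Pi.single x 1 + Pi.single y 1 : Fin d → ℕ) j < 4 := by
    intro x y j
    simp only [Pi.add_apply, Pi.single_apply]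
    split_ifs <;> norm_num
  have hsum : ∑ j, a j = ∑ j, b j := by simp [a, b, sum_add_distrib]
  have hcond : (∀ j ∈ univ.erase j₀, a j = b j) ↔ p = q ∧ k = l ∨ p = l ∧ k = q := by
    calc (∀ j ∈ univ.erase j₀, a j = b j) ↔ a = b :=
          ⟨fun h => eq_of_sum_eq_of_forall_ne j₀ hsum fun j hj => h j (by simpa using hj),
            fun h j _ => congrFun h j⟩
      _ ↔ p = q ∧ k = l ∨ p = l ∧ k = q := by
        rw [Pi.single_add_single_eq_single_add_single one_ne_zero one_ne_zero]
        norm_num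
  rw [sum_congr rfl fun n _ => hprod n,
    sum_filter_apply_eq_prod j₀ 0 fun j (m : Fin 4) => (I ^ a j * (-I) ^ b j) ^ (m : ℕ),
    Fin.val_zero, pow_zero, one_mul,
    prod_congr rfl fun j _ => sum_fin_four_I_pow_mul_neg_I_pow (hsmall p k j) (hsmall q l j),
    prod_ite_zero, prod_const, card_erase_of_mem (mem_univ _), card_univ, Fintype.card_fin]
  congr 1
  exact propext hcond

lemma sum_krausDiag_mul_mul_conjTranspose (ρ : Matrix (Fin d) (Fin d) ℂ) :
    ∑ j, krausDiag d j * ρ * (krausDiag d j)ᴴ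
      = ((d : ℂ) + 1)⁻¹ • diagonal fun j => ρ j j := by
  simp only [krausDiag, smul_mul_mul_conjTranspose_smul,
    one_div_sqrt_mul_star (by positivity : (0 : ℝ) ≤ d + 1), conjTranspose_single,
    star_one, single_mul_mul_single, one_mul, mul_one, ← smul_sum,
    sum_single_eq_diagonal]
  push_cast
  rfl

lemma psiProj_mul_sigmaZ (n : Fin d → Fin 4) :
    psiProj d n * sigmaZ d n = vecMulVec (fun j => I ^ (n j : ℕ)) (fun j => I ^ (n j : ℕ)) := by
  ext p k
  rw [psiProj, sigmaZ, mul_diagonal, of_apply, vecMulVec_apply, mul_assoc, ← mul_pow]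
  norm_num

lemma sum_krausPsi_mul_mul_conjTranspose_apply (j₀ : Fin d) (ρ : Matrix (Fin d) (Fin d) ℂ)
    (p q : Fin d) :
    (∑ n ∈ univ.filter (fun n : Fin d → Fin 4 => n j₀ = 0),
        krausPsi d n * ρ * (krausPsi d n)ᴴ) p q
      = ((d : ℂ) + 1)⁻¹ * if p = q then ρ.trace else ρ q p := by
  simp only [Matrix.sum_apply, krausPsi, smul_mul_mul_conjTranspose_smul,
    one_div_sqrt_mul_star (by positivity : (0 : ℝ) ≤ 4 ^ (d - 1) * (d + 1)), psiProj_mul_sigmaZ]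
  simp only [Matrix.smul_apply, smul_eq_mul, vecMulVec_mul_mul_conjTranspose_apply, star_pow,
    Complex.star_def, conj_I, ← mul_sum]
  rw [sum_comm]
  simp only [sum_comm (s := univ.filter _), ← mul_sum, sum_filter_I_pow_mul_neg_I_pow, mul_ite,
    mul_zero, ← ite_zero_mul, ← sum_mul, sum_sum_ite_pair_eq]
  split_ifs <;> push_cast <;> field_simp

theorem kraus_channel_eq (j₀ : Fin d) (ρ : Matrix (Fin d) (Fin d) ℂ) :
    ∑ j, krausDiag d j * ρ * (krausDiag d j)ᴴ
        + ∑ n ∈ univ.filter (fun n : Fin d → Fin 4 => n j₀ = 0),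
            krausPsi d n * ρ * (krausPsi d n)ᴴ
      = ((d : ℂ) + 1)⁻¹ • (ρ.trace • 1 + ρᵀ) := by
  ext p q
  rw [Matrix.add_apply, sum_krausDiag_mul_mul_conjTranspose,
    sum_krausPsi_mul_mul_conjTranspose_apply]
  by_cases hpq : p = q
  · subst hpq
    simp only [Matrix.smul_apply, diagonal_apply_eq, Matrix.add_apply, one_apply_eq,
      transpose_apply, if_true, smul_eq_mul]
    ring
  · simp [hpq, diagonal_apply_ne, one_apply_ne]

end

/-- Action of the Kraus operators on a rank-one density operator
`ρ = Σ_{k,l} β_k conj(β_l)|k⟩⟨l|`: the output `Σ_i E_i ρ E_i†` has diagonal entries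
`(1+|β_p|²)/(d+1)` and off-diagonal `(p,q)` entries `β_q·conj(β_p)/(d+1)`. -/
theorem kraus_channel_action (d : ℕ) (hd : 2 ≤ d) (β : Fin d → ℂ)
    (hβ : ∑ i, ‖β i‖ ^ 2 = 1) (p q : Fin d) :
    ((∑ j : Fin d,
        krausDiag d j * (Matrix.of fun k l => β k * (starRingEnd ℂ) (β l)) * (krausDiag d j)ᴴ)
      + ∑ n ∈ Finset.univ.filter (fun n : Fin d → Fin 4 => n ⟨0, by omega⟩ = 0),
          krausPsi d n * (Matrix.of fun k l => β k * (starRingEnd ℂ) (β l)) * (krausPsi d n)ᴴ) p q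
      = if p = q then ((1 + ‖β p‖ ^ 2 : ℝ) : ℂ) / (d + 1)
        else β q * (starRingEnd ℂ) (β p) / (d + 1) := by
  have htrace : (Matrix.of fun k l => β k * (starRingEnd ℂ) (β l)).trace = 1 := by
    simp only [trace, diag_apply, of_apply, mul_conj']
    exact_mod_cast hβ
  rw [kraus_channel_eq, Matrix.smul_apply, Matrix.add_apply, Matrix.smul_apply, htrace,
    transpose_apply, of_apply]
  split_ifs with hpq
  · subst hpq
    rw [one_apply_eq, mul_conj']
    push_cast
    ring
  · rw [one_apply_ne hpq]
    simp only [smul_eq_mul]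
    ring
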